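/- If V > 0 and π/3 < ψ < π, then the layer potential V₊ attains its global maximum over ℝ² at the opposite moiré-cell corner r₊ = −(a₁+a₂)/3: for every r ∈ ℝ², V₊(r) ≤ 6V cos(ψ − 2π/3), with equality at r = −(a₁+a₂)/3. Equivalently, for all u, v ∈ ℝ, cos(u+ψ) + cos(v+ψ) + cos(u+v−ψ) ≤ 3 cos(ψ − 2π/3), with equality at u = v = −2π/3; hence the minimum of −V₊ lies at the 2b Wyckoff position −(a₁+a₂)/3. -/
import Mathlib


open Real

noncomputable section

/-- Dot product on ℝ². -/
def dot2 (p q : ℝ × ℝ) : ℝ := p.1 * q.1 + p.2 * q.2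

/-- The first-shell moiré reciprocal vectors b₁ = k_θ(1,0), b₂ = R b₁, b₃ = R b₂. -/
def bv (kθ : ℝ) : Fin 3 → ℝ × ℝ
  | 0 => (kθ, 0)
  | 1 => (-(kθ / 2), kθ * Real.sqrt 3 / 2)
  | 2 => (-(kθ / 2), -(kθ * Real.sqrt 3 / 2))

/-- Top-layer moiré potential V₊(r) = 2V ∑ₙ cos(bₙ·r + ψ). -/
def Vtop (kθ V ψ : ℝ) (r : ℝ × ℝ) : ℝ :=
  2 * V * ∑ n : Fin 3, Real.cos (dot2 (bv kθ n) r + ψ)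

/-- The moiré lattice vector a₁ = (2π/k_θ)(1, 1/√3). -/
def av₁ (kθ : ℝ) : ℝ × ℝ := (2 * Real.pi / kθ, 2 * Real.pi / (kθ * Real.sqrt 3))

/-- The moiré lattice vector a₂ = (2π/k_θ)(0, 2/√3). -/
def av₂ (kθ : ℝ) : ℝ × ℝ := (0, 4 * Real.pi / (kθ * Real.sqrt 3))

end


lemma lemA (t w : ℝ) (ht : t^2 ≤ 1) (hw : w^2 ≤ 1) :
    3*(w - t)^2*(1 - t^2) ≤ (2 - t*w - t^2)^2 := by
  nlinarith [sq_nonneg (2*t^2 - t*w - 1), mul_nonneg (sub_nonneg.2 ht) (sub_nonneg.2 hw)]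

lemma lemB (a b : ℝ) :
    12*(Real.sin a * Real.sin b * Real.sin (a+b))^2
      ≤ (Real.sin a^2 + Real.sin b^2 + Real.sin (a+b)^2)^2 := by
  have ht : (Real.cos (a+b))^2 ≤ 1 := by
    nlinarith [Real.neg_one_le_cos (a+b), Real.cos_le_one (a+b)]
  have hw : (Real.cos (a-b))^2 ≤ 1 := by
    nlinarith [Real.neg_one_le_cos (a-b), Real.cos_le_one (a-b)]
  have h1 : Real.sin a * Real.sin b = (Real.cos (a-b) - Real.cos (a+b))/2 := by
    rw [Real.cos_sub, Real.cos_add]; ring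
  have h2 : Real.sin a^2 + Real.sin b^2 + Real.sin (a+b)^2
      = 2 - Real.cos (a+b)*Real.cos (a-b) - (Real.cos (a+b))^2 := by
    rw [Real.cos_sub, Real.cos_add, Real.sin_add]
    linear_combination (2 - Real.sin b^2) * Real.sin_sq_add_cos_sq a
      + (2 - Real.sin a^2 + 2*(Real.sin a^2 + Real.cos a^2 - 1)) * Real.sin_sq_add_cos_sq b
  have h3 : Real.sin (a+b)^2 = 1 - (Real.cos (a+b))^2 := by
    linear_combination Real.sin_sq_add_cos_sq (a+b)
  have e1 : (Real.sin a * Real.sin b * Real.sin (a+b))^2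
      = ((Real.cos (a-b) - Real.cos (a+b))/2)^2 * (1 - (Real.cos (a+b))^2) := by
    rw [mul_pow, h1, h3]
  rw [e1, h2]
  have := lemA (Real.cos (a+b)) (Real.cos (a-b)) ht hw
  nlinarith [this]

lemma lemC (a b : ℝ) :
    2*Real.sqrt 3*|Real.sin a * Real.sin b * Real.sin (a+b)|
      ≤ Real.sin a^2 + Real.sin b^2 + Real.sin (a+b)^2 := by
  set Q := Real.sin a * Real.sin b * Real.sin (a+b) with hQ
  set P := Real.sin a^2 + Real.sin b^2 + Real.sin (a+b)^2 with hP
  have hPnn : 0 ≤ P := by rw [hP]; positivity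
  have hB : 12*Q^2 ≤ P^2 := lemB a b
  have h0 : 2*Real.sqrt 3*|Q| = Real.sqrt (12*Q^2) := by
    have h12 : ((2:ℝ)*Real.sqrt 3)^2 = 12 := by
      rw [mul_pow, Real.sq_sqrt (by norm_num : (0:ℝ) ≤ 3)]; norm_num
    rw [show (12:ℝ)*Q^2 = (2*Real.sqrt 3)^2 * Q^2 from by rw [h12]]
    rw [Real.sqrt_mul (by positivity), Real.sqrt_sq (by positivity),
      Real.sqrt_sq_eq_abs]
  rw [h0]
  calc Real.sqrt (12*Q^2) ≤ Real.sqrt (P^2) := Real.sqrt_le_sqrt hB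
    _ = P := Real.sqrt_sq hPnn

lemma keyId (a b φ : ℝ) :
    3*Real.cos φ - (Real.cos (a+a+φ) + Real.cos (b+b+φ) + Real.cos (a+a+(b+b)-φ))
      = 2*Real.cos φ*(Real.sin a^2 + Real.sin b^2 + Real.sin (a+b)^2)
        + 4*Real.sin φ*(Real.sin a * Real.sin b * Real.sin (a+b)) := by
  simp only [Real.cos_add, Real.sin_add, Real.cos_sub, Real.sin_sub]
  linear_combination
    (-2*Real.cos φ - Real.cos φ*(Real.sin b^2 + Real.cos b^2 - 1)
      - 2*Real.sin φ*Real.sin b*Real.cos b) * Real.sin_sq_add_cos_sq a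
    + (-2*Real.cos φ - 2*Real.sin φ*Real.sin a*Real.cos a) * Real.sin_sq_add_cos_sq b

lemma lemD (φ x y : ℝ) (hφ : |Real.sin φ| ≤ Real.sqrt 3 * Real.cos φ) :
    Real.cos (x+φ) + Real.cos (y+φ) + Real.cos (x+y-φ) ≤ 3 * Real.cos φ := by
  have key := keyId (x/2) (y/2) φ
  have ex : x/2 + x/2 = x := by ring
  have ey : y/2 + y/2 = y := by ring
  rw [ex, ey] at key
  set Q := Real.sin (x/2) * Real.sin (y/2) * Real.sin (x/2+y/2) with hQ
  set P := Real.sin (x/2)^2 + Real.sin (y/2)^2 + Real.sin (x/2+y/2)^2 with hP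
  have hcos : 0 ≤ Real.cos φ := by
    by_contra h
    push_neg at h
    have h3 : (0:ℝ) < Real.sqrt 3 := by positivity
    nlinarith [abs_nonneg (Real.sin φ), mul_pos h3 (neg_pos.2 h)]
  have hC : 2*Real.sqrt 3*|Q| ≤ P := lemC (x/2) (y/2)
  have h1 : -(Real.sin φ * Q) ≤ |Real.sin φ| * |Q| := by
    rw [← abs_mul]; exact neg_le_abs _
  have h2 : |Real.sin φ| * |Q| ≤ Real.sqrt 3 * Real.cos φ * |Q| :=
    mul_le_mul_of_nonneg_right hφ (abs_nonneg Q)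
  have h3 : Real.cos φ * (2*Real.sqrt 3*|Q|) ≤ Real.cos φ * P :=
    mul_le_mul_of_nonneg_left hC hcos
  nlinarith [key, h1, h2, h3]

/-- For V > 0 and π/3 < ψ < π, the layer potential V₊ attains its global maximum at
r₊ = −(a₁+a₂)/3: V₊(r) ≤ 6V cos(ψ−2π/3) with equality at −(a₁+a₂)/3. Equivalently,
cos(u+ψ)+cos(v+ψ)+cos(u+v−ψ) ≤ 3cos(ψ−2π/3) with equality at u = v = −2π/3. -/
theorem Vtop_max_at_opposite_corner (kθ V ψ : ℝ) (hkθ : 0 < kθ) (hV : 0 < V)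
    (hψ₁ : Real.pi / 3 < ψ) (hψ₂ : ψ < Real.pi) :
    (∀ r : ℝ × ℝ, Vtop kθ V ψ r ≤ 6 * V * Real.cos (ψ - 2 * Real.pi / 3)) ∧
    Vtop kθ V ψ (-((1/3 : ℝ) • (av₁ kθ + av₂ kθ)))
      = 6 * V * Real.cos (ψ - 2 * Real.pi / 3) ∧
    (∀ u v : ℝ,
      Real.cos (u + ψ) + Real.cos (v + ψ) + Real.cos (u + v - ψ)
        ≤ 3 * Real.cos (ψ - 2 * Real.pi / 3)) ∧
    Real.cos (-(2 * Real.pi / 3) + ψ) + Real.cos (-(2 * Real.pi / 3) + ψ)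
        + Real.cos (-(2 * Real.pi / 3) + -(2 * Real.pi / 3) - ψ)
      = 3 * Real.cos (ψ - 2 * Real.pi / 3) := by
  have hpi := Real.pi_pos
  set φ := ψ - 2 * Real.pi / 3 with hφdef
  -- bounds on φ
  have hφ1 : -(Real.pi/3) < φ := by rw [hφdef]; linarith
  have hφ2 : φ < Real.pi/3 := by rw [hφdef]; linarith
  have habs : |φ| ≤ Real.pi/3 := abs_le.2 ⟨by linarith, by linarith⟩
  have hc : (1/2 : ℝ) ≤ Real.cos φ := by
    have h1 : Real.cos (Real.pi/3) ≤ Real.cos |φ| :=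
      Real.cos_le_cos_of_nonneg_of_le_pi (abs_nonneg φ) (by linarith) habs
    rw [Real.cos_abs, Real.cos_pi_div_three] at h1
    exact h1
  have hφ : |Real.sin φ| ≤ Real.sqrt 3 * Real.cos φ := by
    have hs2 : Real.sin φ^2 ≤ 3 * Real.cos φ^2 := by
      nlinarith [Real.sin_sq_add_cos_sq φ, hc]
    calc |Real.sin φ| = Real.sqrt (Real.sin φ^2) := (Real.sqrt_sq_eq_abs _).symm
      _ ≤ Real.sqrt (3 * Real.cos φ^2) := Real.sqrt_le_sqrt hs2
      _ = Real.sqrt 3 * Real.cos φ := by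
          rw [Real.sqrt_mul (by norm_num), Real.sqrt_sq (by linarith)]
  have part3 : ∀ u v : ℝ,
      Real.cos (u + ψ) + Real.cos (v + ψ) + Real.cos (u + v - ψ)
        ≤ 3 * Real.cos φ := by
    intro u v
    have h := lemD φ (u + 2*Real.pi/3) (v + 2*Real.pi/3) hφ
    rw [show u + 2*Real.pi/3 + φ = u + ψ by rw [hφdef]; ring,
        show v + 2*Real.pi/3 + φ = v + ψ by rw [hφdef]; ring,
        show u + 2*Real.pi/3 + (v + 2*Real.pi/3) - φ = (u + v - ψ) + 2*Real.pi by
          rw [hφdef]; ring,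
        Real.cos_add_two_pi] at h
    exact h
  have hk : kθ ≠ 0 := ne_of_gt hkθ
  have hs : Real.sqrt 3 ≠ 0 := by positivity
  refine ⟨?_, ?_, part3, ?_⟩
  · intro r
    have e2 : dot2 (bv kθ 2) r = -(dot2 (bv kθ 0) r + dot2 (bv kθ 1) r) := by
      simp only [dot2, bv]; ring
    have h := part3 (dot2 (bv kθ 0) r) (dot2 (bv kθ 1) r)
    rw [Vtop, Fin.sum_univ_three, e2,
      show -(dot2 (bv kθ 0) r + dot2 (bv kθ 1) r) + ψ
        = -((dot2 (bv kθ 0) r) + (dot2 (bv kθ 1) r) - ψ) by ring, Real.cos_neg]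
    nlinarith [h, hV]
  · have d0 : dot2 (bv kθ 0) (-((1/3 : ℝ) • (av₁ kθ + av₂ kθ))) = -(2*Real.pi/3) := by
      simp only [dot2, bv, av₁, av₂, Prod.fst_add, Prod.snd_add, Prod.smul_fst,
        Prod.smul_snd, Prod.fst_neg, Prod.snd_neg, smul_eq_mul]
      field_simp
      ring
    have d1 : dot2 (bv kθ 1) (-((1/3 : ℝ) • (av₁ kθ + av₂ kθ))) = -(2*Real.pi/3) := by
      simp only [dot2, bv, av₁, av₂, Prod.fst_add, Prod.snd_add, Prod.smul_fst,
        Prod.smul_snd, Prod.fst_neg, Prod.snd_neg, smul_eq_mul]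
      field_simp
      ring
    have d2 : dot2 (bv kθ 2) (-((1/3 : ℝ) • (av₁ kθ + av₂ kθ))) = 4*Real.pi/3 := by
      simp only [dot2, bv, av₁, av₂, Prod.fst_add, Prod.snd_add, Prod.smul_fst,
        Prod.smul_snd, Prod.fst_neg, Prod.snd_neg, smul_eq_mul]
      field_simp
      ring
    rw [Vtop, Fin.sum_univ_three, d0, d1, d2,
      show 4*Real.pi/3 + ψ = φ + 2*Real.pi by rw [hφdef]; ring,
      Real.cos_add_two_pi, show -(2*Real.pi/3) + ψ = φ by rw [hφdef]; ring]
    ring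
  · rw [show -(2*Real.pi/3) + ψ = φ by rw [hφdef]; ring,
      show -(2*Real.pi/3) + -(2*Real.pi/3) - ψ = -(φ + 2*Real.pi) by rw [hφdef]; ring,
      Real.cos_neg, Real.cos_add_two_pi]
    ring
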